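/- Let n > 1 and let D_n be the subalgebra of Ł_{n,1} × Ł_{n,n−1} generated by the pair ((1,0),(1,1)). Then Ł_{n,1} is embeddable into D_n. -/

import Mathlib

/-!
Write the elements of `Ł_{n,1}` as lexicographic pairs `(P, Q)`. The map `ψ (P, Q) = (P, (n - 1) Q)`
is a monotone additive endomorphism of `ℤ ×ₗ ℤ` sending `(n, 1)` to `(n, n - 1)`, so it induces a
hoop homomorphism `Ł_{n,1} → Ł_{n,n-1}`, and `x ↦ (x, ψ x)` embeds `Ł_{n,1}` into the product.
The image lies in `D_n`: `Ł_{n,1}` is generated by `(1, 0)`, whose image `((1, 0), (1, 0))` is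
`g · (g → (¬g)^(n-1))` for the generator `g = ((1, 0), (1, 1))`.

Membership in a generated subalgebra is checked on values in the ambient lattice-ordered group,
where the hoop operations are truncated sums.
-/

/-- The interval `[0, u]` in a totally ordered abelian group: the universe of
the Wajsberg hoop `Γ(G, u)`. -/
def Gam {G : Type*} [AddCommGroup G] [LinearOrder G] [IsOrderedAddMonoid G] (u : G) : Type _ :=
  {x : G // 0 ≤ x ∧ x ≤ u}

/-- Product `a·b = max(a+b-u, 0)` of `Γ(G,u)`. -/
def hmul {G : Type*} [AddCommGroup G] [LinearOrder G] [IsOrderedAddMonoid G] {u : G} (a b : Gam u) : Gam u :=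
  ⟨max (a.1 + b.1 - u) 0, le_max_right _ _,
    max_le (sub_le_iff_le_add.mpr (add_le_add a.2.2 b.2.2)) (a.2.1.trans a.2.2)⟩

/-- Residuum `a→b = min(u-a+b, u)` of `Γ(G,u)`. -/
def himp {G : Type*} [AddCommGroup G] [LinearOrder G] [IsOrderedAddMonoid G] {u : G} (a b : Gam u) : Gam u :=
  ⟨min (u - a.1 + b.1) u,
    le_min (add_nonneg (sub_nonneg.mpr a.2.2) b.2.1) (a.2.1.trans a.2.2),
    min_le_right _ _⟩

/-- Top element (monoid unit) of `Γ(G,u)`. -/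
def hone {G : Type*} [AddCommGroup G] [LinearOrder G] [IsOrderedAddMonoid G] (u : G) (hu : 0 ≤ u) : Gam u :=
  ⟨u, hu, le_rfl⟩

/-- An embedding of hoops: an injective map preserving `·`, `→` and `1`. -/
structure IsHoopEmbedding {A B : Type*} (mA : A → A → A) (iA : A → A → A) (oA : A)
    (mB : B → B → B) (iB : B → B → B) (oB : B) (f : A → B) : Prop where
  inj : Function.Injective f
  map_mul : ∀ x y, f (mA x y) = mB (f x) (f y)
  map_imp : ∀ x y, f (iA x y) = iB (f x) (f y)
  map_one : f oA = oB

/-- Membership in the subalgebra generated by `a`. -/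
inductive HGen {A : Type*} (m : A → A → A) (i : A → A → A) (o : A) (a : A) : A → Prop
  | base : HGen m i o a a
  | one : HGen m i o a o
  | mul {x y} : HGen m i o a x → HGen m i o a y → HGen m i o a (m x y)
  | imp {x y} : HGen m i o a x → HGen m i o a y → HGen m i o a (i x y)

theorem lex_le (a b c d : ℤ) (h : a < c ∨ (a = c ∧ b ≤ d)) :
    (toLex (a, b) : ℤ ×ₗ ℤ) ≤ toLex (c, d) :=
  Prod.Lex.le_iff.mpr h

theorem HGen.map {A B : Type*} {m i : A → A → A} {o a : A} {m' i' : B → B → B} {o' b : B}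
    {f : A → B} (hm : ∀ x y, f (m x y) = m' (f x) (f y)) (hi : ∀ x y, f (i x y) = i' (f x) (f y))
    (ho : f o = o') (ha : HGen m' i' o' b (f a)) {x : A} (hx : HGen m i o a x) :
    HGen m' i' o' b (f x) := by
  induction hx with
  | base => exact ha
  | one => exact ho ▸ HGen.one
  | mul _ _ ihx ihy => exact (hm _ _).symm ▸ HGen.mul ihx ihy
  | imp _ _ ihx ihy => exact (hi _ _).symm ▸ HGen.imp ihx ihy

section GammaPresentation

variable {A V : Type*}

def generatedValues (m i : A → A → A) (o a : A) (val : A → V) : Set V :=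
  val '' {x | HGen m i o a x}

theorem hGen_of_mem_generatedValues {m i : A → A → A} {o a x : A} {val : A → V}
    (hval : Function.Injective val) (hx : val x ∈ generatedValues m i o a val) :
    HGen m i o a x := by
  obtain ⟨y, hy, hyx⟩ := hx
  exact hval hyx ▸ hy

variable [AddCommGroup V] [Lattice V]

/-- `V` is only lattice-ordered so that products of algebras `Γ(G, u)` are covered too. -/
structure IsGammaPresentation (m i : A → A → A) (o : A) (val : A → V) (u : V) : Prop where
  val_mul : ∀ x y, val (m x y) = (val x + val y - u) ⊔ 0
  val_imp : ∀ x y, val (i x y) = (u - val x + val y) ⊓ u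
  val_one : val o = u

namespace IsGammaPresentation

variable {m i : A → A → A} {o a : A} {val : A → V} {u v w : V}

theorem one_mem (h : IsGammaPresentation m i o val u) : u ∈ generatedValues m i o a val :=
  ⟨o, HGen.one, h.val_one⟩

theorem mul_mem (h : IsGammaPresentation m i o val u) (hv : v ∈ generatedValues m i o a val)
    (hw : w ∈ generatedValues m i o a val) :
    (v + w - u) ⊔ 0 ∈ generatedValues m i o a val := by
  obtain ⟨x, hx, rfl⟩ := hv
  obtain ⟨y, hy, rfl⟩ := hw
  exact ⟨m x y, HGen.mul hx hy, h.val_mul x y⟩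

theorem imp_mem (h : IsGammaPresentation m i o val u) (hv : v ∈ generatedValues m i o a val)
    (hw : w ∈ generatedValues m i o a val) :
    (u - v + w) ⊓ u ∈ generatedValues m i o a val := by
  obtain ⟨x, hx, rfl⟩ := hv
  obtain ⟨y, hy, rfl⟩ := hw
  exact ⟨i x y, HGen.imp hx hy, h.val_imp x y⟩

theorem add_sub_top_mem (h : IsGammaPresentation m i o val u)
    (hv : v ∈ generatedValues m i o a val) (hw : w ∈ generatedValues m i o a val)
    (hvw : 0 ≤ v + w - u) : v + w - u ∈ generatedValues m i o a val :=
  sup_eq_left.mpr hvw ▸ h.mul_mem hv hw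

variable [IsOrderedAddMonoid V]

theorem zero_mem (h : IsGammaPresentation m i o val u)
    (hv : v ∈ generatedValues m i o a val) (hw : w ∈ generatedValues m i o a val)
    (hvw : v + w ≤ u) : 0 ∈ generatedValues m i o a val :=
  sup_eq_right.mpr (sub_nonpos.mpr hvw) ▸ h.mul_mem hv hw

theorem top_sub_add_mem (h : IsGammaPresentation m i o val u)
    (hv : v ∈ generatedValues m i o a val) (hw : w ∈ generatedValues m i o a val)
    (hwv : w ≤ v) : u - v + w ∈ generatedValues m i o a val :=
  have hle : u - v + w ≤ u := by rwa [sub_add_comm, add_le_iff_nonpos_left, sub_nonpos]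
  inf_eq_left.mpr hle ▸ h.imp_mem hv hw

theorem top_sub_mem (h : IsGammaPresentation m i o val u)
    (hv : v ∈ generatedValues m i o a val) (h0 : 0 ∈ generatedValues m i o a val)
    (hv0 : 0 ≤ v) : u - v ∈ generatedValues m i o a val :=
  add_zero (u - v) ▸ h.top_sub_add_mem hv h0 hv0

theorem sub_nsmul_mem (h : IsGammaPresentation m i o val u) (hv : v ∈ generatedValues m i o a val)
    (hw : u - w ∈ generatedValues m i o a val) (hw0 : 0 ≤ w) {k : ℕ} (hk : 0 ≤ v - k • w) :
    v - k • w ∈ generatedValues m i o a val := by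
  induction k with
  | zero => simpa using hv
  | succ k ih =>
    have hk' : 0 ≤ v - k • w := hk.trans (sub_le_sub_left (nsmul_le_nsmul_left hw0 k.le_succ) v)
    have key : v - (k + 1) • w = (v - k • w) + (u - w) - u := by rw [succ_nsmul]; abel
    exact key ▸ h.add_sub_top_mem (ih hk') hw (key ▸ hk)

end IsGammaPresentation

end GammaPresentation

section Gam

variable {G H : Type*} [AddCommGroup G] [LinearOrder G] [IsOrderedAddMonoid G]
  [AddCommGroup H] [LinearOrder H] [IsOrderedAddMonoid H]

theorem Gam.isGammaPresentation_val (u : G) (hu : 0 ≤ u) :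
    IsGammaPresentation hmul himp (hone u hu) Subtype.val u :=
  ⟨fun _ _ => rfl, fun _ _ => rfl, rfl⟩

def Gam.map (φ : G →+ H) (hφ : Monotone φ) {u : G} {u' : H} (hu : φ u = u') (x : Gam u) :
    Gam u' :=
  ⟨φ x.1, map_zero φ ▸ hφ x.2.1, hu ▸ hφ x.2.2⟩

variable (φ : G →+ H) (hφ : Monotone φ) {u : G} {u' : H} (hu : φ u = u')

theorem Gam.map_hmul (x y : Gam u) :
    Gam.map φ hφ hu (hmul x y) = hmul (Gam.map φ hφ hu x) (Gam.map φ hφ hu y) := by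
  subst hu
  exact Subtype.ext (by simp only [Gam.map, hmul, hφ.map_max, map_zero, map_sub, map_add])

theorem Gam.map_himp (x y : Gam u) :
    Gam.map φ hφ hu (himp x y) = himp (Gam.map φ hφ hu x) (Gam.map φ hφ hu y) := by
  subst hu
  exact Subtype.ext (by simp only [Gam.map, _root_.himp, hφ.map_min, map_sub, map_add])

theorem Gam.map_hone (h0 : 0 ≤ u) (h0' : 0 ≤ u') : Gam.map φ hφ hu (hone u h0) = hone u' h0' :=
  Subtype.ext hu

end Gam

def lexMapSnd {α β γ : Type*} [AddZeroClass α] [AddZeroClass β] [AddZeroClass γ] (f : β →+ γ) :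
    α ×ₗ β →+ α ×ₗ γ where
  toFun v := toLex ((ofLex v).1, f (ofLex v).2)
  map_zero' := by simp
  map_add' v w := by simp only [ofLex_add, Prod.fst_add, Prod.snd_add, map_add]; rfl

theorem lexMapSnd_monotone {α β γ : Type*} [AddZeroClass α] [Preorder α] [AddZeroClass β]
    [Preorder β] [AddZeroClass γ] [Preorder γ] {f : β →+ γ} (hf : Monotone f) :
    Monotone (lexMapSnd (α := α) f) := by
  intro v w hvw
  rcases Prod.Lex.le_iff.mp hvw with h | ⟨h, h'⟩
  · exact Prod.Lex.le_iff.mpr (Or.inl h)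
  · exact Prod.Lex.le_iff.mpr (Or.inr ⟨h, hf h'⟩)

theorem toLex_add_toLex (a b c d : ℤ) :
    (toLex (a, b) : ℤ ×ₗ ℤ) + toLex (c, d) = toLex (a + c, b + d) := rfl

theorem toLex_sub_toLex (a b c d : ℤ) :
    (toLex (a, b) : ℤ ×ₗ ℤ) - toLex (c, d) = toLex (a - c, b - d) := rfl

theorem nsmul_toLex (k : ℕ) (a b : ℤ) : k • (toLex (a, b) : ℤ ×ₗ ℤ) = toLex (k * a, k * b) := by
  simp only [← nsmul_eq_mul]; rfl

theorem zero_eq_toLex : (0 : ℤ ×ₗ ℤ) = toLex (0, 0) := rfl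

section Dn

variable (n : ℕ)

/-- `Ł_{n,1} = Γ(ℤ ×ₗ ℤ, (n,1))`. -/
abbrev Ln1 := Gam (toLex ((n : ℤ), (1 : ℤ)))

/-- `Ł_{n,n-1} = Γ(ℤ ×ₗ ℤ, (n,n-1))`. -/
abbrev LnPred := Gam (toLex ((n : ℤ), (n : ℤ) - 1))

/-- Componentwise product on `Ł_{n,1} × Ł_{n,n−1}`. -/
def pmul (x y : Ln1 n × LnPred n) : Ln1 n × LnPred n :=
  (hmul x.1 y.1, hmul x.2 y.2)

/-- Componentwise residuum on `Ł_{n,1} × Ł_{n,n−1}`. -/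
def pimp (x y : Ln1 n × LnPred n) : Ln1 n × LnPred n :=
  (himp x.1 y.1, himp x.2 y.2)

variable (hn : 1 < n)

/-- Unit of `Ł_{n,1} × Ł_{n,n−1}`. -/
def pone : Ln1 n × LnPred n :=
  (hone _ (lex_le 0 0 _ _ (Or.inl (by exact_mod_cast Nat.zero_lt_of_lt hn))),
   hone _ (lex_le 0 0 _ _ (Or.inl (by exact_mod_cast Nat.zero_lt_of_lt hn))))

/-- The generator `((1,0),(1,1))` of `D_n`. -/
def genD : Ln1 n × LnPred n :=
  (⟨toLex ((1 : ℤ), (0 : ℤ)),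
      lex_le 0 0 1 0 (Or.inl one_pos), lex_le 1 0 _ _ (Or.inl (by exact_mod_cast hn))⟩,
   ⟨toLex ((1 : ℤ), (1 : ℤ)),
      lex_le 0 0 1 1 (Or.inl one_pos), lex_le 1 1 _ _ (Or.inl (by exact_mod_cast hn))⟩)

/-- `D_n`: the subalgebra of `Ł_{n,1} × Ł_{n,n−1}` generated by `((1,0),(1,1))`. -/
def Dn : Type :=
  {x : Ln1 n × LnPred n // HGen (pmul n) (pimp n) (pone n hn) (genD n hn) x}

/-- Product of `D_n`. -/
def dmul (a b : Dn n hn) : Dn n hn := ⟨pmul n a.1 b.1, HGen.mul a.2 b.2⟩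

/-- Residuum of `D_n`. -/
def dimp (a b : Dn n hn) : Dn n hn := ⟨pimp n a.1 b.1, HGen.imp a.2 b.2⟩

/-- Unit of `D_n`. -/
def done : Dn n hn := ⟨pone n hn, HGen.one⟩

theorem Ln1.val_mem_generatedValues (x : Ln1 n) :
    x.1 ∈ generatedValues hmul himp (pone n hn).1 (genD n hn).1 Subtype.val := by
  obtain ⟨⟨P, Q⟩, hlo, hhi⟩ := x
  change toLex (0, 0) ≤ toLex (P, Q) at hlo
  change toLex (P, Q) ≤ toLex ((n : ℤ), 1) at hhi
  change toLex (P, Q) ∈ _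
  have h : IsGammaPresentation hmul himp (pone n hn).1 Subtype.val (toLex ((n : ℤ), 1)) :=
    Gam.isGammaPresentation_val _ (pone n hn).1.2.1
  set S := generatedValues hmul himp (pone n hn).1 (genD n hn).1 Subtype.val
  have hN : (2 : ℤ) ≤ n := by exact_mod_cast hn
  simp only [Prod.Lex.toLex_le_toLex] at hlo hhi
  have ha : toLex ((1 : ℤ), (0 : ℤ)) ∈ S := ⟨_, HGen.base, rfl⟩
  have hzero : (0 : ℤ ×ₗ ℤ) ∈ S := h.zero_mem ha ha (lex_le 2 0 n 1 (by omega))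
  have hna : toLex ((n : ℤ), (1 : ℤ)) - toLex (1, 0) ∈ S :=
    h.top_sub_mem ha hzero (lex_le 0 0 _ _ (by omega))
  -- `(P', 1)` is the `(n - P')`-th power of `¬(1, 0) = (n - 1, 1)`
  have hrow : ∀ P' : ℤ, 0 ≤ P' → P' ≤ n → toLex (P', (1 : ℤ)) ∈ S := fun P' h1 h2 => by
    convert h.sub_nsmul_mem h.one_mem hna (lex_le 0 0 _ _ (by omega)) (k := (n - P').toNat) ?_
      using 1
    · simp only [toLex_sub_toLex, nsmul_toLex, toLex_inj, Prod.mk.injEq]; omega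
    · simp only [toLex_sub_toLex, nsmul_toLex, zero_eq_toLex, Prod.Lex.toLex_le_toLex]; omega
  -- `(n, 0) = (1, 1) → (1, 0)`, and `(n, Q')` is the `(1 - Q')`-th power of `(n, 0)`
  have hn0 : toLex ((n : ℤ), (1 : ℤ)) - toLex (0, 1) ∈ S := by
    convert h.top_sub_add_mem (hrow 1 (by omega) (by omega)) ha (lex_le _ _ _ _ (by omega))
      using 1
    simp only [toLex_add_toLex, toLex_sub_toLex, toLex_inj, Prod.mk.injEq]; omega
  have hcol : ∀ Q' : ℤ, Q' ≤ 1 → toLex ((n : ℤ), Q') ∈ S := fun Q' h1 => by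
    convert h.sub_nsmul_mem h.one_mem hn0 (lex_le 0 0 _ _ (by omega)) (k := (1 - Q').toNat) ?_
      using 1
    · simp only [toLex_sub_toLex, nsmul_toLex, toLex_inj, Prod.mk.injEq]; omega
    · simp only [toLex_sub_toLex, nsmul_toLex, zero_eq_toLex, Prod.Lex.toLex_le_toLex]; omega
  -- `(P, Q)` is `(P, 1) · (n, Q)` if `Q ≤ 1`, and `(n, 2 - Q) → (P, 1)` otherwise
  rcases le_or_gt Q 1 with hQ | hQ
  · convert h.add_sub_top_mem (hrow P (by omega) (by omega)) (hcol Q hQ) ?_ using 1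
    · simp only [toLex_add_toLex, toLex_sub_toLex, toLex_inj, Prod.mk.injEq]; omega
    · simp only [toLex_add_toLex, toLex_sub_toLex, zero_eq_toLex, Prod.Lex.toLex_le_toLex]; omega
  · convert h.top_sub_add_mem (hcol (2 - Q) (by omega)) (hrow P (by omega) (by omega)) ?_ using 1
    · simp only [toLex_add_toLex, toLex_sub_toLex, toLex_inj, Prod.mk.injEq]; omega
    · simp only [Prod.Lex.toLex_le_toLex]; omega

def lexScaleSnd : ℤ ×ₗ ℤ →+ ℤ ×ₗ ℤ := lexMapSnd (AddMonoidHom.mulLeft ((n : ℤ) - 1))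

theorem lexScaleSnd_monotone (h1 : 1 ≤ n) : Monotone (lexScaleSnd n) :=
  lexMapSnd_monotone fun _ _ h => mul_le_mul_of_nonneg_left h (by omega)

theorem lexScaleSnd_top : lexScaleSnd n (toLex ((n : ℤ), 1)) = toLex ((n : ℤ), (n : ℤ) - 1) :=
  congrArg (fun Q => toLex ((n : ℤ), Q)) (mul_one _)

def Ln1.toLnPred : Ln1 n → LnPred n :=
  Gam.map (lexScaleSnd n) (lexScaleSnd_monotone n hn.le) (lexScaleSnd_top n)

def Ln1.toProd (x : Ln1 n) : Ln1 n × LnPred n := (x, Ln1.toLnPred n hn x)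

theorem Ln1.toProd_hmul (x y : Ln1 n) :
    Ln1.toProd n hn (hmul x y) = pmul n (Ln1.toProd n hn x) (Ln1.toProd n hn y) :=
  Prod.ext rfl (Gam.map_hmul _ (lexScaleSnd_monotone n hn.le) (lexScaleSnd_top n) x y)

theorem Ln1.toProd_himp (x y : Ln1 n) :
    Ln1.toProd n hn (himp x y) = pimp n (Ln1.toProd n hn x) (Ln1.toProd n hn y) :=
  Prod.ext rfl (Gam.map_himp _ (lexScaleSnd_monotone n hn.le) (lexScaleSnd_top n) x y)

theorem Ln1.toProd_hone : Ln1.toProd n hn (pone n hn).1 = pone n hn :=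
  Prod.ext rfl (Gam.map_hone _ (lexScaleSnd_monotone n hn.le) (lexScaleSnd_top n)
    (pone n hn).1.2.1 (pone n hn).2.2.1)

def prodVal (x : Ln1 n × LnPred n) : (ℤ ×ₗ ℤ) × (ℤ ×ₗ ℤ) := (x.1.1, x.2.1)

theorem prodVal_injective : Function.Injective (prodVal n) := fun _ _ hxy =>
  Prod.ext (Subtype.ext (congrArg Prod.fst hxy)) (Subtype.ext (congrArg Prod.snd hxy))

theorem isGammaPresentation_pmul :
    IsGammaPresentation (pmul n) (pimp n) (pone n hn) (prodVal n)
      (toLex ((n : ℤ), (1 : ℤ)), toLex ((n : ℤ), (n : ℤ) - 1)) :=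
  ⟨fun _ _ => rfl, fun _ _ => rfl, rfl⟩

theorem zero_mem_generatedValues_genD :
    0 ∈ generatedValues (pmul n) (pimp n) (pone n hn) (genD n hn) (prodVal n) := by
  have hN : (2 : ℤ) ≤ n := by exact_mod_cast hn
  have hg : prodVal n (genD n hn) ∈ generatedValues (pmul n) (pimp n) (pone n hn) (genD n hn)
      (prodVal n) := ⟨_, HGen.base, rfl⟩
  -- `0 = g·g·g`; for `n = 2` already `g·g = ((0, 0), (0, 1))` is not `0`
  refine (isGammaPresentation_pmul n hn).zero_mem
    ((isGammaPresentation_pmul n hn).mul_mem hg hg) hg ?_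
  rw [sup_add, zero_add, sup_le_iff]
  simp only [prodVal, genD, Prod.mk_add_mk, Prod.mk_sub_mk, Prod.mk_le_mk, toLex_add_toLex,
    toLex_sub_toLex, Prod.Lex.toLex_le_toLex]
  omega

theorem compl_genD_pow_mem_generatedValues :
    (toLex ((1 : ℤ), (1 : ℤ)), toLex ((1 : ℤ), (0 : ℤ))) ∈
      generatedValues (pmul n) (pimp n) (pone n hn) (genD n hn) (prodVal n) := by
  have h := isGammaPresentation_pmul n hn
  have hN : (2 : ℤ) ≤ n := by exact_mod_cast hn
  set g := (toLex ((1 : ℤ), (0 : ℤ)), toLex ((1 : ℤ), (1 : ℤ)))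
  have hg : g ∈ generatedValues (pmul n) (pimp n) (pone n hn) (genD n hn) (prodVal n) :=
    ⟨_, HGen.base, rfl⟩
  have hg0 : 0 ≤ g := Prod.mk_le_mk.mpr ⟨lex_le 0 0 1 0 (by omega), lex_le 0 0 1 1 (by omega)⟩
  have hgk : (n - 1) • g = (toLex ((n : ℤ) - 1, 0), toLex ((n : ℤ) - 1, (n : ℤ) - 1)) := by
    refine Prod.ext ((nsmul_toLex _ _ _).trans ?_) ((nsmul_toLex _ _ _).trans ?_) <;>
      simp only [Nat.cast_sub hn.le, Nat.cast_one, mul_one, mul_zero]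
  -- `¬g = u - g`, so `(¬g)^(n-1) = u - (n - 1) • g`
  have hu : (toLex ((1 : ℤ), (1 : ℤ)), toLex ((1 : ℤ), (0 : ℤ))) =
      (toLex ((n : ℤ), (1 : ℤ)), toLex ((n : ℤ), (n : ℤ) - 1)) - (n - 1) • g := by
    simp only [hgk, Prod.mk_sub_mk, toLex_sub_toLex, toLex_inj, Prod.mk.injEq]
    omega
  refine hu ▸ h.sub_nsmul_mem h.one_mem
    (h.top_sub_mem hg (zero_mem_generatedValues_genD n hn) hg0) hg0 (hu ▸ ?_)
  exact Prod.mk_le_mk.mpr ⟨lex_le 0 0 1 1 (by omega), lex_le 0 0 1 0 (by omega)⟩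

theorem Ln1.hGen_toProd_genD :
    HGen (pmul n) (pimp n) (pone n hn) (genD n hn) (Ln1.toProd n hn (genD n hn).1) := by
  have h := isGammaPresentation_pmul n hn
  have hN : (2 : ℤ) ≤ n := by exact_mod_cast hn
  set u := (toLex ((n : ℤ), (1 : ℤ)), toLex ((n : ℤ), (n : ℤ) - 1))
  set g := (toLex ((1 : ℤ), (0 : ℤ)), toLex ((1 : ℤ), (1 : ℤ)))
  have hg : g ∈ generatedValues (pmul n) (pimp n) (pone n hn) (genD n hn) (prodVal n) :=
    ⟨_, HGen.base, rfl⟩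
  -- `t = g → (¬g)^(n-1)` and `g · t = ((1, 0), (1, 0))`
  have ht : (u - g + (toLex ((1 : ℤ), (1 : ℤ)), toLex ((1 : ℤ), (0 : ℤ)))) ⊓ u =
      (toLex ((n : ℤ), (1 : ℤ)), toLex ((n : ℤ), (n : ℤ) - 2)) := by
    simp only [u, g, Prod.mk_sub_mk, Prod.mk_add_mk, Prod.mk_inf_mk, toLex_sub_toLex,
      toLex_add_toLex, Prod.mk.injEq]
    constructor
    · exact inf_eq_right.mpr (lex_le _ _ _ _ (by omega))
    · rw [inf_eq_left.mpr (lex_le _ _ _ _ (by omega))]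
      simp only [toLex_inj, Prod.mk.injEq]; omega
  have hpos : 0 ≤ g + (toLex ((n : ℤ), (1 : ℤ)), toLex ((n : ℤ), (n : ℤ) - 2)) - u := by
    simp only [u, g, Prod.mk_sub_mk, Prod.mk_add_mk, Prod.le_def, Prod.fst_zero, Prod.snd_zero,
      toLex_sub_toLex, toLex_add_toLex, zero_eq_toLex, Prod.Lex.toLex_le_toLex]
    omega
  have hA := h.add_sub_top_mem hg
    (ht ▸ h.imp_mem hg (compl_genD_pow_mem_generatedValues n hn)) hpos
  refine hGen_of_mem_generatedValues (prodVal_injective n) ?_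
  convert hA using 1
  change (toLex ((1 : ℤ), (0 : ℤ)), toLex ((1 : ℤ), ((n : ℤ) - 1) * 0)) = _
  simp only [u, g, Prod.mk_sub_mk, Prod.mk_add_mk, toLex_sub_toLex, toLex_add_toLex,
    Prod.mk.injEq, toLex_inj, mul_zero]
  omega

theorem Ln1.hGen_toProd (x : Ln1 n) :
    HGen (pmul n) (pimp n) (pone n hn) (genD n hn) (Ln1.toProd n hn x) :=
  HGen.map (Ln1.toProd_hmul n hn) (Ln1.toProd_himp n hn) (Ln1.toProd_hone n hn)
    (Ln1.hGen_toProd_genD n hn)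
    (hGen_of_mem_generatedValues Subtype.val_injective (Ln1.val_mem_generatedValues n hn x))

/-- Gispert: for `n > 1`, the chain `Ł_{n,1}` is embeddable into
`D_n`, the subalgebra of `Ł_{n,1} × Ł_{n,n−1}` generated by `((1,0),(1,1))`. -/
theorem Ln1_embeds_into_Dn :
    ∃ f : Ln1 n → Dn n hn,
      IsHoopEmbedding hmul himp
        (hone _ (lex_le 0 0 _ _ (Or.inl (by exact_mod_cast Nat.zero_lt_of_lt hn))))
        (dmul n hn) (dimp n hn) (done n hn) f :=
  ⟨fun x => ⟨Ln1.toProd n hn x, Ln1.hGen_toProd n hn x⟩,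
    { inj := fun _ _ hxy => congrArg (fun z => z.1.1) hxy
      map_mul := fun x y => Subtype.ext (Ln1.toProd_hmul n hn x y)
      map_imp := fun x y => Subtype.ext (Ln1.toProd_himp n hn x y)
      map_one := Subtype.ext (Ln1.toProd_hone n hn) }⟩

end Dn
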